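/- Let r : ℝ → ℝ be continuously differentiable, let A : ℝ → ℝ³ be smooth with A'''(t) + r(t) A(t) = 0 and det(A, A', A'')(t) ≠ 0 for all t, and let x, y : ℝ → ℝ be smooth with y(t) ≠ 0 for all t. Set B := x A + y A'. Then B(t) × B'''(t) = 0 for all t if and only if there is a constant C ∈ ℝ such that x + y' ≡ C and y y⁽⁴⁾ + 2 y'''(y' − C) + 3 r y' y + r' y² ≡ 0. -/

import Mathlib

open Matrix

/-- Scalar triple product on ℝ³. -/
def det3 (u v w : Fin 3 → ℝ) : ℝ := u ⬝ᵥ (v ⨯₃ w)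

/-!
Differentiating a curve `aA + bA' + cA''` and using `A''' = -rA` gives
`(a' - rc)A + (a + b')A' + (b + c')A''`. Three such steps starting from `B = xA + yA'` give
`B''' = αA + βA' + 3(x' + y'')A''`, hence
`B × B''' = (xβ - yα) A×A' + 3x(x' + y'') A×A'' + 3y(x' + y'') A'×A''`.
Since `A, A', A''` is a basis, so is `A×A', A×A'', A'×A''`; with `y ≠ 0` the cross product
vanishes iff `x' + y'' ≡ 0`, i.e. `x + y' ≡ C`, and `xβ - yα ≡ 0`. Substituting `x = C - y'`
turns `xβ - yα` into the left-hand side of the dancing mate equation.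
-/

section CrossProduct

variable {u v w : Fin 3 → ℝ}

theorem smul_add_smul_cross_smul_add_smul_add_smul (p q a b c : ℝ) :
    (p • u + q • v) ⨯₃ (a • u + b • v + c • w) =
      (p * b - q * a) • (u ⨯₃ v) + (p * c) • (u ⨯₃ w) + (q * c) • (v ⨯₃ w) := by
  ext i
  fin_cases i <;> simp [cross_apply] <;> ring

theorem cross_combination_eq_zero_iff (hdet : det3 u v w ≠ 0) {a b c : ℝ} :
    a • (u ⨯₃ v) + b • (u ⨯₃ w) + c • (v ⨯₃ w) = 0 ↔ a = 0 ∧ b = 0 ∧ c = 0 := by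
  refine ⟨fun h => ?_, by rintro ⟨rfl, rfl, rfl⟩; simp⟩
  have hdot (z : Fin 3 → ℝ) : (a • (u ⨯₃ v) + b • (u ⨯₃ w) + c • (v ⨯₃ w)) ⬝ᵥ z = 0 := by
    rw [h, zero_dotProduct]
  have ha : a * det3 u v w = 0 := by
    rw [← hdot w]; simp [det3, cross_apply, dotProduct, Fin.sum_univ_three]; ring
  have hb : -b * det3 u v w = 0 := by
    rw [← hdot v]; simp [det3, cross_apply, dotProduct, Fin.sum_univ_three]; ring
  have hc : c * det3 u v w = 0 := by
    rw [← hdot u]; simp [det3, cross_apply, dotProduct, Fin.sum_univ_three]; ring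
  simp_all

theorem smul_add_smul_cross_eq_zero_iff (hdet : det3 u v w ≠ 0) {p q a b c : ℝ} (hq : q ≠ 0) :
    (p • u + q • v) ⨯₃ (a • u + b • v + c • w) = 0 ↔ p * b - q * a = 0 ∧ c = 0 := by
  rw [smul_add_smul_cross_smul_add_smul_add_smul, cross_combination_eq_zero_iff hdet,
    mul_eq_zero_iff_left hq]
  aesop

end CrossProduct

theorem ContDiff.hasDerivAt_iterate_deriv {F : Type*} [NormedAddCommGroup F] [NormedSpace ℝ F]
    {f : ℝ → F} {n k : ℕ} (hf : ContDiff ℝ n f) (hk : k < n) (t : ℝ) :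
    HasDerivAt (deriv^[k] f) (deriv^[k + 1] f t) t := by
  have := (hf.differentiable_iteratedDeriv k (by exact_mod_cast hk) t).hasDerivAt
  rwa [iteratedDeriv_eq_iterate, ← Function.iterate_succ_apply' deriv] at this

section Frame

variable {E : Type*} [NormedAddCommGroup E] [NormedSpace ℝ E] {A : ℝ → E} {r : ℝ → ℝ}

noncomputable def frameComb (A : ℝ → E) (a b c : ℝ → ℝ) (t : ℝ) : E :=
  a t • A t + b t • deriv A t + c t • deriv (deriv A) t

theorem hasDerivAt_frameComb (hA : ContDiff ℝ 3 A) {t : ℝ}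
    (hode : deriv (deriv (deriv A)) t + r t • A t = 0) {a b c : ℝ → ℝ} {a' b' c' : ℝ}
    (ha : HasDerivAt a a' t) (hb : HasDerivAt b b' t) (hc : HasDerivAt c c' t) :
    HasDerivAt (frameComb A a b c)
      ((a' - r t * c t) • A t + (a t + b') • deriv A t + (b t + c') • deriv (deriv A) t) t := by
  have hA₀ : HasDerivAt A (deriv A t) t := hA.hasDerivAt_iterate_deriv (k := 0) (by norm_num) t
  have hA₁ : HasDerivAt (deriv A) (deriv (deriv A) t) t :=
    hA.hasDerivAt_iterate_deriv (k := 1) (by norm_num) t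
  have hA₂ : HasDerivAt (deriv (deriv A)) (-(r t • A t)) t := by
    rw [← eq_neg_of_add_eq_zero_left hode]
    exact hA.hasDerivAt_iterate_deriv (k := 2) (by norm_num) t
  exact ((ha.smul hA₀).fun_add (hb.smul hA₁)).fun_add (hc.smul hA₂) |>.congr_deriv (by module)

theorem deriv_frameComb (hA : ContDiff ℝ 3 A)
    (hode : ∀ t, deriv (deriv (deriv A)) t + r t • A t = 0) {a b c a' b' c' : ℝ → ℝ}
    (ha : ∀ t, HasDerivAt a (a' t) t) (hb : ∀ t, HasDerivAt b (b' t) t)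
    (hc : ∀ t, HasDerivAt c (c' t) t) :
    deriv (frameComb A a b c) =
      frameComb A (fun t => a' t - r t * c t) (fun t => a t + b' t) (fun t => b t + c' t) :=
  funext fun t => (hasDerivAt_frameComb hA (hode t) (ha t) (hb t) (hc t)).deriv

theorem deriv_deriv_deriv_smul_add_smul_deriv (hA : ContDiff ℝ 3 A)
    (hode : ∀ t, deriv (deriv (deriv A)) t + r t • A t = 0) (hr : Differentiable ℝ r)
    {x y : ℝ → ℝ} (hx : ContDiff ℝ 3 x) (hy : ContDiff ℝ 3 y) :
    deriv (deriv (deriv (fun s => x s • A s + y s • deriv A s))) =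
      frameComb A
        (fun t => deriv (deriv (deriv x)) t - deriv r t * y t - 3 * r t * deriv y t - r t * x t)
        (fun t => 3 * deriv (deriv x) t + deriv (deriv (deriv y)) t - r t * y t)
        (fun t => 3 * (deriv x t + deriv (deriv y) t)) := by
  have hx₀ : ∀ t, HasDerivAt x (deriv x t) t := hx.hasDerivAt_iterate_deriv (k := 0) (by norm_num)
  have hx₁ : ∀ t, HasDerivAt (deriv x) (deriv (deriv x) t) t :=
    hx.hasDerivAt_iterate_deriv (k := 1) (by norm_num)
  have hx₂ : ∀ t, HasDerivAt (deriv (deriv x)) (deriv (deriv (deriv x)) t) t :=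
    hx.hasDerivAt_iterate_deriv (k := 2) (by norm_num)
  have hy₀ : ∀ t, HasDerivAt y (deriv y t) t := hy.hasDerivAt_iterate_deriv (k := 0) (by norm_num)
  have hy₁ : ∀ t, HasDerivAt (deriv y) (deriv (deriv y) t) t :=
    hy.hasDerivAt_iterate_deriv (k := 1) (by norm_num)
  have hy₂ : ∀ t, HasDerivAt (deriv (deriv y)) (deriv (deriv (deriv y)) t) t :=
    hy.hasDerivAt_iterate_deriv (k := 2) (by norm_num)
  have hB : (fun s => x s • A s + y s • deriv A s) = frameComb A x y (fun _ => 0) := by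
    funext s; simp [frameComb]
  rw [hB, deriv_frameComb hA hode hx₀ hy₀ (fun t => hasDerivAt_const t 0)]
  simp only [mul_zero, sub_zero, add_zero]
  rw [deriv_frameComb hA hode hx₁ (fun t => (hx₀ t).fun_add (hy₁ t)) hy₀,
    deriv_frameComb hA hode (fun t => (hx₂ t).fun_sub ((hr t).hasDerivAt.fun_mul (hy₀ t)))
      (fun t => (hx₁ t).fun_add ((hx₁ t).fun_add (hy₂ t)))
      (fun t => ((hx₀ t).fun_add (hy₁ t)).fun_add (hy₁ t))]
  congr 1 <;> funext t <;> ring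

end Frame

theorem exists_forall_eq_const_iff_deriv_eq_zero {𝕜 G : Type*} [RCLike 𝕜] [NormedAddCommGroup G]
    [NormedSpace 𝕜 G] {f : 𝕜 → G} (hf : Differentiable 𝕜 f) :
    (∃ C, ∀ t, f t = C) ↔ ∀ t, deriv f t = 0 := by
  refine ⟨fun ⟨C, hC⟩ t => ?_, fun h => ⟨f 0, fun t => is_const_of_deriv_eq_zero hf h t 0⟩⟩
  rw [show f = fun _ => C from funext hC, deriv_const]

theorem dancingMate_eq_of_add_deriv_eq {r x y : ℝ → ℝ} {C : ℝ} (hC : ∀ t, x t + deriv y t = C)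
    (t : ℝ) :
    x t * (3 * deriv (deriv x) t + deriv (deriv (deriv y)) t - r t * y t)
        - y t * (deriv (deriv (deriv x)) t - deriv r t * y t - 3 * r t * deriv y t - r t * x t) =
      y t * deriv (deriv (deriv (deriv y))) t + 2 * deriv (deriv (deriv y)) t * (deriv y t - C)
        + 3 * r t * deriv y t * y t + deriv r t * y t ^ 2 := by
  obtain rfl : x = fun t => C - deriv y t := funext fun t => eq_sub_of_add_eq (hC t)
  simp only [deriv_const_sub', deriv.fun_neg']
  ring

/-- The projective-involute / dancing-mate equation: with `A''' + rA = 0` in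
Laguerre–Forsyth form and `B = xA + yA'`, one has `B × B''' ≡ 0` iff there is a
constant `C` with `x + y' ≡ C` and
`y y⁽⁴⁾ + 2y'''(y' − C) + 3 r y' y + r' y² ≡ 0`. -/
theorem projective_involute_equation (r : ℝ → ℝ) (hr : ContDiff ℝ 1 r)
    (A : ℝ → Fin 3 → ℝ) (hA : ContDiff ℝ (⊤ : ℕ∞) A)
    (hode : ∀ t, deriv (deriv (deriv A)) t + r t • A t = 0)
    (hnd : ∀ t, det3 (A t) (deriv A t) (deriv (deriv A) t) ≠ 0)
    (x y : ℝ → ℝ) (hx : ContDiff ℝ (⊤ : ℕ∞) x) (hy : ContDiff ℝ (⊤ : ℕ∞) y)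
    (hy0 : ∀ t, y t ≠ 0) :
    (∀ t, (x t • A t + y t • deriv A t) ⨯₃
        deriv (deriv (deriv (fun s => x s • A s + y s • deriv A s))) t = 0)
    ↔ ∃ C : ℝ, (∀ t, x t + deriv y t = C) ∧
        ∀ t, y t * deriv (deriv (deriv (deriv y))) t
            + 2 * deriv (deriv (deriv y)) t * (deriv y t - C)
            + 3 * r t * deriv y t * y t
            + deriv r t * (y t) ^ 2 = 0 := by
  have h3 : (3 : WithTop ℕ∞) ≤ (⊤ : ℕ∞) := WithTop.coe_le_coe.2 le_top
  have hB := deriv_deriv_deriv_smul_add_smul_deriv (hA.of_le h3) hode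
    (hr.differentiable one_ne_zero) (hx.of_le h3) (hy.of_le h3)
  have hconst : (∃ C, ∀ t, x t + deriv y t = C) ↔
      ∀ t, 3 * (deriv x t + deriv (deriv y) t) = 0 := by
    have hdx : Differentiable ℝ x := hx.differentiable (by simp)
    have hdy : Differentiable ℝ (deriv y) := (hy.iterate_deriv 1).differentiable (by simp)
    rw [exists_forall_eq_const_iff_deriv_eq_zero (hdx.fun_add hdy)]
    simp [deriv_fun_add (hdx _) (hdy _)]
  rw [hB]
  refine (forall_congr' fun t => smul_add_smul_cross_eq_zero_iff (hnd t) (hy0 t)).trans ?_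
  rw [forall_and, ← hconst]
  constructor
  · rintro ⟨hX, C, hC⟩
    exact ⟨C, hC, fun t => dancingMate_eq_of_add_deriv_eq hC t ▸ hX t⟩
  · rintro ⟨C, hC, hE⟩
    exact ⟨fun t => (dancingMate_eq_of_add_deriv_eq hC t).symm ▸ hE t, C, hC⟩
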